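/- arXiv:2510.14716 — 5 statements merged into one kernel-verified Lean document; each statement's English description precedes it below -/
import Mathlib

section
/- Let X, Y, Z be Stone spaces (with their Borel σ-algebras), and let κ be a Markov kernel from X to Y and η a Markov kernel from Y to Z. Assume both are locally constant, i.e., for every clopen set U ⊆ Y the function x ↦ κ x U is locally constant, and for every clopen set V ⊆ Z the function y ↦ η y V is locally constant. Then the composite Markov kernel η ∘ₖ κ, given by (η ∘ₖ κ) x V = ∫ η y V d(κ x)(y), is locally constant: for every clopen set V ⊆ Z, the function x ↦ (η ∘ₖ κ) x V is locally constant. -/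
open MeasureTheory ProbabilityTheory

/-- Composition of locally constant Markov kernels between Stone spaces
is locally constant. -/
theorem locallyConstant_comp
    {X Y Z : Type*}
    [TopologicalSpace X] [CompactSpace X] [T2Space X] [TotallyDisconnectedSpace X]
    [MeasurableSpace X] [BorelSpace X]
    [TopologicalSpace Y] [CompactSpace Y] [T2Space Y] [TotallyDisconnectedSpace Y]
    [MeasurableSpace Y] [BorelSpace Y]
    [TopologicalSpace Z] [CompactSpace Z] [T2Space Z] [TotallyDisconnectedSpace Z]
    [MeasurableSpace Z] [BorelSpace Z]
    (κ : Kernel X Y) [IsMarkovKernel κ] (η : Kernel Y Z) [IsMarkovKernel η]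
    (hκ : ∀ U : Set Y, IsClopen U → IsLocallyConstant fun x => κ x U)
    (hη : ∀ V : Set Z, IsClopen V → IsLocallyConstant fun y => η y V) :
    ∀ V : Set Z, IsClopen V → IsLocallyConstant fun x => (η ∘ₖ κ) x V := by
  intro V hV
  have hVm : MeasurableSet V := hV.2.measurableSet
  set f : Y → ENNReal := fun y => η y V with hfdef
  have hf : IsLocallyConstant f := hη V hV
  have hfin : (Set.range f).Finite := hf.range_finite
  set s : Finset ENNReal := hfin.toFinset with hs
  have hmemb : ∀ y, f y ∈ s := fun y => hfin.mem_toFinset.2 ⟨y, rfl⟩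
  have hfiber : ∀ c : ENNReal, IsClopen (f ⁻¹' {c}) := fun c => hf.isClopen_fiber c
  have hfibm : ∀ c : ENNReal, MeasurableSet (f ⁻¹' {c}) :=
    fun c => (hfiber c).2.measurableSet
  have key : ∀ x, (η ∘ₖ κ) x V = ∑ c ∈ s, c * κ x (f ⁻¹' {c}) := by
    intro x
    rw [Kernel.comp_apply' _ _ _ hVm]
    have hre : ∀ y, f y = ∑ c ∈ s, (f ⁻¹' {c}).indicator (fun _ => c) y := by
      intro y
      rw [Finset.sum_eq_single (f y)]
      · simp [Set.indicator_of_mem, Set.mem_preimage]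
      · intro b _ hb
        exact Set.indicator_of_notMem (s := f ⁻¹' {b}) (f := fun _ => b) (fun h => hb (Eq.symm h))
      · intro h; exact absurd (hmemb y) h
    calc ∫⁻ y, η y V ∂(κ x) = ∫⁻ y, ∑ c ∈ s, (f ⁻¹' {c}).indicator (fun _ => c) y ∂(κ x) := by
          refine lintegral_congr fun y => ?_
          exact hre y
      _ = ∑ c ∈ s, ∫⁻ y, (f ⁻¹' {c}).indicator (fun _ => c) y ∂(κ x) :=
          lintegral_finset_sum _ (fun c _ => measurable_const.indicator (hfibm c))
      _ = ∑ c ∈ s, c * κ x (f ⁻¹' {c}) := by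
          refine Finset.sum_congr rfl fun c _ => ?_
          rw [lintegral_indicator_const (hfibm c)]
  have hsum : ∀ t : Finset ENNReal,
      IsLocallyConstant (fun x => ∑ c ∈ t, c * κ x (f ⁻¹' {c})) := by
    intro t
    classical
    induction t using Finset.induction with
    | empty => simp only [Finset.sum_empty]; exact IsLocallyConstant.const 0
    | insert _ _ h ih =>
      simp only [Finset.sum_insert h]
      exact ((IsLocallyConstant.const _).mul (hκ _ (hfiber _))).add ih
  simp only [key]
  exact hsum s
end

section
/- Let X, Y, Z, W be Stone spaces (with their Borel σ-algebras), and let κ be a locally constant Markov kernel from X to Y and η a locally constant Markov kernel from Z to W. Then the parallel composition κ ∥ₖ η from X × Z to Y × W, given by (κ ∥ₖ η)(x, z) = (κ x) ⊗ (η z) (product of measures), is a Markov kernel that is locally constant: for every clopen set C ⊆ Y × W, the function (x, z) ↦ (κ ∥ₖ η)(x, z)(C) is locally constant on X × Z. -/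
open MeasureTheory ProbabilityTheory Set

private lemma cond_mem_eq {α : Type*} {b c : Bool} {s : Set α} {x : α}
    (hb : x ∈ cond b s sᶜ) (hc : x ∈ cond c s sᶜ) : b = c := by
  cases b <;> cases c <;> simp_all [Set.mem_compl_iff]

lemma clopen_prod_decomp
    {Y W : Type*}
    [TopologicalSpace Y] [CompactSpace Y] [T2Space Y] [TotallyDisconnectedSpace Y]
    [TopologicalSpace W] [CompactSpace W] [T2Space W] [TotallyDisconnectedSpace W]
    {C : Set (Y × W)} (hC : IsClopen C) :
    ∃ (n : ℕ) (U : Fin n → Set Y) (V : Fin n → Set W),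
      (∀ i, IsClopen (U i)) ∧ (∀ i, IsClopen (V i)) ∧
      (Pairwise fun i j => Disjoint (U i ×ˢ V i) (U j ×ˢ V j)) ∧
      C = ⋃ i, U i ×ˢ V i := by
  classical
  have key : ∀ p : Y × W, ∃ (u : Set Y) (v : Set W), IsClopen u ∧ IsClopen v ∧
      p ∈ u ×ˢ v ∧ (u ×ˢ v ⊆ C ∨ u ×ˢ v ⊆ Cᶜ) := by
    intro p
    by_cases hp : p ∈ C
    · obtain ⟨u, v, hu, hv, hpu, hpv, huv⟩ := isOpen_prod_iff.1 hC.2 p.1 p.2 hp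
      obtain ⟨u', hu', hpu', hu'u⟩ := compact_exists_isClopen_in_isOpen hu hpu
      obtain ⟨v', hv', hpv', hv'v⟩ := compact_exists_isClopen_in_isOpen hv hpv
      exact ⟨u', v', hu', hv', ⟨hpu', hpv'⟩,
        Or.inl ((Set.prod_mono hu'u hv'v).trans huv)⟩
    · obtain ⟨u, v, hu, hv, hpu, hpv, huv⟩ :=
        isOpen_prod_iff.1 hC.compl.2 p.1 p.2 hp
      obtain ⟨u', hu', hpu', hu'u⟩ := compact_exists_isClopen_in_isOpen hu hpu
      obtain ⟨v', hv', hpv', hv'v⟩ := compact_exists_isClopen_in_isOpen hv hpv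
      exact ⟨u', v', hu', hv', ⟨hpu', hpv'⟩,
        Or.inr ((Set.prod_mono hu'u hv'v).trans huv)⟩
  choose u v hu hv hmem hsub using key
  have hcover : (Set.univ : Set (Y × W)) ⊆ ⋃ p, u p ×ˢ v p := fun p _ =>
    Set.mem_iUnion.2 ⟨p, hmem p⟩
  obtain ⟨t, ht⟩ := isCompact_univ.elim_finite_subcover (fun p => u p ×ˢ v p)
    (fun p => ((hu p).prod (hv p)).2) hcover
  -- atoms
  let A : (t → Bool) → Set Y := fun σ => ⋂ j : t, cond (σ j) (u j) (u j)ᶜ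
  let B : (t → Bool) → Set W := fun τ => ⋂ j : t, cond (τ j) (v j) (v j)ᶜ
  have hA : ∀ σ, IsClopen (A σ) := fun σ =>
    isClopen_iInter_of_finite fun j => by
      cases h : σ j <;> simp [h, hu j, (hu j).compl]
  have hB : ∀ τ, IsClopen (B τ) := fun τ =>
    isClopen_iInter_of_finite fun j => by
      cases h : τ j <;> simp [h, hv j, (hv j).compl]
  set σY : Y → (t → Bool) := fun y j => decide (y ∈ u j) with hσY
  set σW : W → (t → Bool) := fun w j => decide (w ∈ v j) with hσW
  have hmemA : ∀ y, y ∈ A (σY y) := by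
    intro y
    refine Set.mem_iInter.2 fun j => ?_
    by_cases h : y ∈ u j <;> simp [A, σY, h]
  have hmemB : ∀ w, w ∈ B (σW w) := by
    intro w
    refine Set.mem_iInter.2 fun j => ?_
    by_cases h : w ∈ v j <;> simp [B, σW, h]
  have hAsub : ∀ (σ : t → Bool) (j : t), σ j = true → A σ ⊆ u j := by
    intro σ j hj y hy
    have := Set.mem_iInter.1 hy j
    rwa [hj] at this
  have hBsub : ∀ (τ : t → Bool) (j : t), τ j = true → B τ ⊆ v j := by
    intro τ j hj w hw
    have := Set.mem_iInter.1 hw j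
    rwa [hj] at this
  -- index type
  let I := {στ : (t → Bool) × (t → Bool) // A στ.1 ×ˢ B στ.2 ⊆ C}
  let e : I ≃ Fin (Fintype.card I) := Fintype.equivFin I
  refine ⟨Fintype.card I, fun i => A ((e.symm i).1.1), fun i => B ((e.symm i).1.2),
    fun i => hA _, fun i => hB _, ?_, ?_⟩
  · -- pairwise disjoint
    intro i j hij
    have h1 : (e.symm i).1 ≠ (e.symm j).1 := by
      intro h
      exact hij (e.symm.injective.eq_iff.1 (Subtype.ext h) ▸ rfl)
    rw [Set.disjoint_left]
    rintro ⟨y, w⟩ ⟨hy, hw⟩ ⟨hy', hw'⟩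
    apply h1
    have e1 : (e.symm i).1.1 = (e.symm j).1.1 := by
      funext k
      exact cond_mem_eq (Set.mem_iInter.1 hy k) (Set.mem_iInter.1 hy' k)
    have e2 : (e.symm i).1.2 = (e.symm j).1.2 := by
      funext k
      exact cond_mem_eq (Set.mem_iInter.1 hw k) (Set.mem_iInter.1 hw' k)
    exact Prod.ext e1 e2
  · ext ⟨y, w⟩
    constructor
    · intro hyw
      obtain ⟨j, hjt, hj⟩ := Set.mem_iUnion₂.1 (ht (Set.mem_univ (y, w)))
      have hABsub : A (σY y) ×ˢ B (σW w) ⊆ u j ×ˢ v j := by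
        refine Set.prod_mono (hAsub _ ⟨j, hjt⟩ ?_) (hBsub _ ⟨j, hjt⟩ ?_)
        · simp [σY, hj.1]
        · simp [σW, hj.2]
      have hAB : A (σY y) ×ˢ B (σW w) ⊆ C := by
        rcases hsub j with h | h
        · exact hABsub.trans h
        · exact absurd (hABsub.trans h ⟨hmemA y, hmemB w⟩) (not_not.2 hyw)
      refine Set.mem_iUnion.2 ⟨e ⟨(σY y, σW w), hAB⟩, ?_⟩
      simp only [Equiv.symm_apply_apply]
      exact ⟨hmemA y, hmemB w⟩
    · intro h
      obtain ⟨i, hi⟩ := Set.mem_iUnion.1 h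
      exact (e.symm i).2 hi

private lemma isLocallyConstant_finset_sum {X ι M : Type*} [TopologicalSpace X]
    [AddCommMonoid M] (s : Finset ι) (f : ι → X → M)
    (h : ∀ i ∈ s, IsLocallyConstant (f i)) :
    IsLocallyConstant (fun x => ∑ i ∈ s, f i x) := by
  classical
  induction s using Finset.induction with
  | empty => simp only [Finset.sum_empty]; exact IsLocallyConstant.const (0 : M)
  | @insert a s hns ih =>
    simp only [Finset.sum_insert hns]
    exact (h a (Finset.mem_insert_self a s)).add
      (ih fun i hi => h i (Finset.mem_insert_of_mem hi))

/-- Parallel composition of two kernels: `(κ ∥ₖ η) (x, z) = (κ x).prod (η z)`. -/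
noncomputable def parallelCompKernel
    {X Y Z W : Type*} [MeasurableSpace X] [MeasurableSpace Y]
    [MeasurableSpace Z] [MeasurableSpace W]
    (κ : Kernel X Y) (η : Kernel Z W) [IsSFiniteKernel κ] [IsSFiniteKernel η] :
    Kernel (X × Z) (Y × W) :=
  (κ.prodMkRight Z).prod (η.prodMkLeft X)

/-- The parallel composition of locally constant Markov kernels between
Stone spaces, given by `(κ ∥ₖ η) (x, z) = (κ x) ⊗ (η z)`, is a locally constant Markov
kernel. -/
theorem parallelComp_locallyConstant
    {X Y Z W : Type*}
    [TopologicalSpace X] [CompactSpace X] [T2Space X] [TotallyDisconnectedSpace X]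
    [MeasurableSpace X] [BorelSpace X]
    [TopologicalSpace Y] [CompactSpace Y] [T2Space Y] [TotallyDisconnectedSpace Y]
    [MeasurableSpace Y] [BorelSpace Y]
    [TopologicalSpace Z] [CompactSpace Z] [T2Space Z] [TotallyDisconnectedSpace Z]
    [MeasurableSpace Z] [BorelSpace Z]
    [TopologicalSpace W] [CompactSpace W] [T2Space W] [TotallyDisconnectedSpace W]
    [MeasurableSpace W] [BorelSpace W]
    (κ : Kernel X Y) [IsMarkovKernel κ] (η : Kernel Z W) [IsMarkovKernel η]
    (hκ : ∀ U : Set Y, IsClopen U → IsLocallyConstant fun x => κ x U)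
    (hη : ∀ V : Set W, IsClopen V → IsLocallyConstant fun z => η z V) :
    (∀ x z, parallelCompKernel κ η (x, z) = (κ x).prod (η z)) ∧
      IsMarkovKernel (parallelCompKernel κ η) ∧
      ∀ C : Set (Y × W), IsClopen C →
        IsLocallyConstant fun p : X × Z => parallelCompKernel κ η p C := by
  have happly : ∀ x z, parallelCompKernel κ η (x, z) = (κ x).prod (η z) := by
    intro x z
    rw [parallelCompKernel, Kernel.prod_apply]
    rfl
  refine ⟨happly, by rw [parallelCompKernel]; infer_instance, ?_⟩
  intro C hC
  obtain ⟨n, U, V, hUc, hVc, hdisj, hCU⟩ := clopen_prod_decomp hC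
  have hfun : (fun p : X × Z => parallelCompKernel κ η p C)
      = fun p : X × Z => ∑ i : Fin n, κ p.1 (U i) * η p.2 (V i) := by
    funext p
    rw [show p = (p.1, p.2) from rfl, happly p.1 p.2, hCU,
      measure_iUnion hdisj (fun i => ((hUc i).2.measurableSet).prod ((hVc i).2.measurableSet)),
      tsum_fintype]
    congr 1
    funext i
    rw [Measure.prod_prod]
  rw [hfun]
  refine isLocallyConstant_finset_sum _ _ fun i _ => ?_
  exact ((hκ _ (hUc i)).comp_continuous continuous_fst).mul
    ((hη _ (hVc i)).comp_continuous continuous_snd)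
end

section
/- Let J and I be types, (X j)_{j ∈ J} and (Y i)_{i ∈ I} families of finite types with the discrete topology, and equip the products Π j, X j and Π i, Y i with their product topologies and Borel σ-algebras. Let κ be a Markov kernel from Π j, X j to Π i, Y i that is locally constant, i.e., for every clopen set U ⊆ Π i, Y i the map x ↦ κ x U is locally constant. Then for every finite set G : Finset I there exists a finite set F : Finset J such that the G-marginal of κ depends only on the F-coordinates of the input: Measure.map (fun y (i : G) => y i) (κ x) = Measure.map (fun y (i : G) => y i) (κ x') whenever x j = x' j for all j ∈ F. -/
open MeasureTheory ProbabilityTheory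

/-- Finitely many of the open cylinders on which `f` is constant cover the compact product,
and `f` depends only on the coordinates they constrain. -/
theorem IsLocallyConstant.exists_finset_dependsOn {ι β : Type*} {X : ι → Type*}
    [∀ i, TopologicalSpace (X i)] [∀ i, CompactSpace (X i)]
    {f : (∀ i, X i) → β} (hf : IsLocallyConstant f) :
    ∃ s : Finset ι, DependsOn f s := by
  classical
  have cylinder : ∀ x : ∀ i, X i, ∃ (F : Finset ι) (u : ∀ i, Set (X i)),
      (∀ i ∈ F, IsOpen (u i) ∧ x i ∈ u i) ∧ (F : Set ι).pi u ⊆ f ⁻¹' {f x} :=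
    fun x => isOpen_pi_iff.1 (hf {f x}) x rfl
  choose F u hu hsub using cylinder
  have hcyl_nhds : ∀ x, (F x : Set ι).pi (u x) ∈ nhds x := fun x =>
    (isOpen_set_pi (F x).finite_toSet fun i hi => (hu x i hi).1).mem_nhds
      fun i hi => (hu x i hi).2
  obtain ⟨t, -, hcover⟩ := isCompact_univ.elim_nhds_subcover _ fun x _ => hcyl_nhds x
  refine ⟨t.biUnion F, fun x y hxy => ?_⟩
  obtain ⟨x₀, hx₀, hx⟩ := Set.mem_iUnion₂.1 (hcover (Set.mem_univ x))
  have hy : y ∈ (F x₀ : Set ι).pi (u x₀) := fun i hi =>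
    hxy i (Finset.mem_biUnion.2 ⟨x₀, hx₀, hi⟩) ▸ hx i hi
  exact (hsub x₀ hx).trans (hsub x₀ hy).symm

theorem isLocallyConstant_map_of_forall_isClopen {α β γ : Type*}
    [TopologicalSpace α] [TopologicalSpace β] [MeasurableSpace β]
    [TopologicalSpace γ] [DiscreteTopology γ] [Finite γ]
    [MeasurableSpace γ] [MeasurableSingletonClass γ]
    {μ : α → Measure β} (hμ : ∀ U : Set β, IsClopen U → IsLocallyConstant fun x => μ x U)
    {r : β → γ} (hr : Continuous r) (hr_meas : Measurable r) :
    IsLocallyConstant fun x => (μ x).map r := by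
  have singleton_injective : Function.Injective fun (ν : Measure γ) (c : γ) => ν {c} :=
    fun ν ν' h => Measure.ext_of_singleton (congrFun h)
  refine IsLocallyConstant.desc _ _ ?_ singleton_injective
  refine (IsLocallyConstant.iff_eventually_eq _).2 fun x => ?_
  have hfiber : ∀ c : γ, ∀ᶠ y in nhds x, μ y (r ⁻¹' {c}) = μ x (r ⁻¹' {c}) := fun c =>
    (hμ _ ((isClopen_discrete {c}).preimage hr)).eventually_eq x
  filter_upwards [Filter.eventually_all.2 hfiber] with y hy
  funext c
  simp only [Function.comp_apply, Measure.map_apply hr_meas (measurableSet_singleton c), hy c]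

theorem marginal_of_locallyConstant_kernel_factors_general
    {J I : Type*} {X : J → Type*} {Y : I → Type*}
    [∀ j, Finite (X j)] [∀ j, TopologicalSpace (X j)]
    [∀ j, MeasurableSpace (X j)]
    [∀ i, Finite (Y i)] [∀ i, TopologicalSpace (Y i)] [∀ i, DiscreteTopology (Y i)]
    [∀ i, MeasurableSpace (Y i)] [∀ i, DiscreteMeasurableSpace (Y i)]
    (κ : Kernel (∀ j, X j) (∀ i, Y i))
    (hκ : ∀ U : Set (∀ i, Y i), IsClopen U → IsLocallyConstant fun x => κ x U) :
    ∀ G : Finset I, ∃ F : Finset J, ∀ x x' : ∀ j, X j,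
      (∀ j ∈ F, x j = x' j) →
        Measure.map (fun y (i : G) => y i) (κ x)
          = Measure.map (fun y (i : G) => y i) (κ x') := by
  intro G
  have hmarginal := isLocallyConstant_map_of_forall_isClopen hκ
    (r := fun y (i : G) => y i) (continuous_pi fun i => continuous_apply _)
    (measurable_pi_lambda _ fun i => measurable_pi_apply _)
  obtain ⟨F, hF⟩ := hmarginal.exists_finset_dependsOn
  exact ⟨F, fun x x' h => hF h⟩

/-- For a locally constant Markov kernel between products of finite
discrete spaces (with Borel σ-algebras), every finite marginal of the kernel depends only
on finitely many coordinates of the input. -/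
theorem marginal_of_locallyConstant_kernel_factors
    {J I : Type*} {X : J → Type*} {Y : I → Type*}
    [∀ j, Finite (X j)] [∀ j, TopologicalSpace (X j)] [∀ j, DiscreteTopology (X j)]
    [∀ j, MeasurableSpace (X j)] [∀ j, DiscreteMeasurableSpace (X j)]
    [BorelSpace (∀ j, X j)]
    [∀ i, Finite (Y i)] [∀ i, TopologicalSpace (Y i)] [∀ i, DiscreteTopology (Y i)]
    [∀ i, MeasurableSpace (Y i)] [∀ i, DiscreteMeasurableSpace (Y i)]
    [BorelSpace (∀ i, Y i)]
    (κ : Kernel (∀ j, X j) (∀ i, Y i)) [IsMarkovKernel κ]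
    (hκ : ∀ U : Set (∀ i, Y i), IsClopen U → IsLocallyConstant fun x => κ x U) :
    ∀ G : Finset I, ∃ F : Finset J, ∀ x x' : ∀ j, X j,
      (∀ j ∈ F, x j = x' j) →
        Measure.map (fun y (i : G) => y i) (κ x)
          = Measure.map (fun y (i : G) => y i) (κ x') :=
  marginal_of_locallyConstant_kernel_factors_general κ hκ
end

section
/- Let A be a Stone space with its Borel σ-algebra, J a countable type, and (X j)_{j ∈ J} a family of finite types with the discrete topology; equip Π j, X j with the product topology and Borel σ-algebra. Suppose that for every finite set F : Finset J we are given a Markov kernel f_F from A to (j : F) → X j such that: (i) for every set S of functions (j : F) → X j, the map a ↦ f_F a S is locally constant; and (ii) the family is compatible: for all F ⊆ F' and all a ∈ A, the pushforward of f_{F'} a along the restriction map ((j : F') → X j) → ((j : F) → X j) equals f_F a. Then there exists a Markov kernel κ from A to Π j, X j such that for every clopen set U of Π j, X j the map a ↦ κ a U is locally constant, and for every finite F and every a, Measure.map (fun x (j : F) => x j) (κ a) = f_F a. -/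
open MeasureTheory ProbabilityTheory
open MeasureTheory Set
open scoped ENNReal

namespace StoneKernelAux

variable {J : Type*} {X : J → Type*} [∀ j, Finite (X j)] [∀ j, MeasurableSpace (X j)]
  [∀ j, DiscreteMeasurableSpace (X j)]

variable (P : ∀ F : Finset J, Measure ((j : F) → X j))

/-- Compatibility of the projective family. -/
def Compat : Prop :=
  ∀ (F G : Finset J) (h : F ⊆ G), Measure.map (Finset.restrict₂ h) (P G) = P F

lemma measurable_restrict₂ {F G : Finset J} (h : F ⊆ G) :
    Measurable (Finset.restrict₂ (π := X) h) :=
  measurable_pi_lambda _ fun _ => measurable_pi_apply _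

lemma apply_restrict₂ {F G : Finset J} (h : F ⊆ G) (hc : Compat P)
    (S : Set ((j : F) → X j)) :
    P F S = P G (Finset.restrict₂ h ⁻¹' S) := by
  rw [← hc F G h, Measure.map_apply (measurable_restrict₂ h) .of_discrete]

lemma cylinder_restrict₂ {F G : Finset J} (h : F ⊆ G) (S : Set ((j : F) → X j)) :
    cylinder F S = cylinder G (Finset.restrict₂ h ⁻¹' S) := by
  ext x; exact Iff.rfl

lemma welldef [Nonempty (∀ j, X j)] (hc : Compat P) {F F' : Finset J}
    {S : Set ((j : F) → X j)} {S' : Set ((j : F') → X j)}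
    (h : cylinder F S = cylinder F' S') : P F S = P F' S' := by
  classical
  have h1 : F ⊆ F ∪ F' := Finset.subset_union_left
  have h2 : F' ⊆ F ∪ F' := Finset.subset_union_right
  rw [apply_restrict₂ P h1 hc S, apply_restrict₂ P h2 hc S']
  congr 1
  have := (cylinder_restrict₂ (X := X) h1 S).symm.trans
    (h.trans (cylinder_restrict₂ h2 S'))
  have hsurj : Function.Surjective ((F ∪ F').restrict (π := X)) := by
    intro y
    exact ⟨fun j => if hj : j ∈ F ∪ F' then y ⟨j, hj⟩ else (Classical.arbitrary (∀ j, X j)) j, by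
      funext j; simp [Finset.restrict]⟩
  exact hsurj.preimage_injective this

/-- The content on cylinder sets, `∞` elsewhere. -/
noncomputable def muZero (t : Set (∀ j, X j)) : ℝ≥0∞ :=
  ⨅ (F : Finset J), ⨅ (S : Set ((j : ↥F) → X j)), ⨅ (_ : t = cylinder F S), P F S

lemma muZero_cylinder [Nonempty (∀ j, X j)] (hc : Compat P) (F : Finset J)
    (S : Set ((j : F) → X j)) : muZero P (cylinder F S) = P F S := by
  refine le_antisymm (iInf_le_of_le F (iInf_le_of_le S (iInf_le_of_le rfl le_rfl)))
    (le_iInf fun F' => le_iInf fun S' => le_iInf fun h => (welldef P hc h).le)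

lemma muZero_empty : muZero (X := X) P ∅ = 0 := by
  refine le_antisymm ?_ (zero_le)
  refine iInf_le_of_le ∅ (iInf_le_of_le (∅ : Set ((j : (∅ : Finset J)) → X j)) (iInf_le_of_le (cylinder_empty _).symm ?_))
  simp

lemma exists_of_muZero_ne_top {t : Set (∀ j, X j)} (h : muZero P t ≠ ⊤) :
    ∃ (F : Finset J) (S : Set ((j : F) → X j)), t = cylinder F S := by
  by_contra hn
  push_neg at hn
  apply h
  simp only [muZero]
  rw [iInf_eq_top]
  intro F
  rw [iInf_eq_top]
  intro S
  exact iInf_neg (hn F S)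


section Top
variable [∀ j, TopologicalSpace (X j)] [∀ j, DiscreteTopology (X j)]

lemma isClopen_cylinder (F : Finset J) (S : Set ((j : ↥F) → X j)) :
    IsClopen (cylinder F S) :=
  (isClopen_discrete S).preimage (continuous_pi fun _ => continuous_apply _)

/-- The outer measure. -/
noncomputable def limOM : OuterMeasure (∀ j, X j) :=
  OuterMeasure.ofFunction (muZero P) (muZero_empty P)

lemma limOM_cylinder [Nonempty (∀ j, X j)] (hc : Compat P)
    [∀ F, IsFiniteMeasure (P F)] (F : Finset J) (S : Set ((j : ↥F) → X j)) :
    limOM P (cylinder F S) = P F S := by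
  classical
  refine le_antisymm ((OuterMeasure.ofFunction_le _).trans_eq (muZero_cylinder P hc F S)) ?_
  rw [limOM, OuterMeasure.ofFunction_apply]
  refine le_iInf fun t => le_iInf fun hcov => ?_
  by_cases htop : ∃ n, muZero P (t n) = ⊤
  · obtain ⟨n, hn⟩ := htop
    refine le_trans ?_ (ENNReal.le_tsum n)
    simp [hn]
  push_neg at htop
  choose Ft St hFt using fun n => exists_of_muZero_ne_top P (htop n)
  -- compactness: finite subcover
  have hcomp' : IsCompact (cylinder F S) :=
    (isClopen_cylinder F S).isClosed.isCompact
  have hopen : ∀ n, IsOpen (t n) := fun n => by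
    rw [hFt n]; exact (isClopen_cylinder _ _).isOpen
  obtain ⟨I, hI⟩ := hcomp'.elim_finite_subcover t hopen hcov
  -- move to a common support
  set G : Finset J := F ∪ I.sup Ft with hG
  have hFG : F ⊆ G := Finset.subset_union_left
  have hnG : ∀ n ∈ I, Ft n ⊆ G := fun n hn =>
    (Finset.le_sup hn).trans Finset.subset_union_right
  have hsurj : Function.Surjective (G.restrict (π := X)) := by
    intro y
    exact ⟨fun j => if hj : j ∈ G then y ⟨j, hj⟩ else (Classical.arbitrary (∀ j, X j)) j, by
      funext j; simp [Finset.restrict]⟩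
  classical
  set T : ℕ → Set ((j : ↥G) → X j) :=
    fun n => if h : n ∈ I then Finset.restrict₂ (hnG n h) ⁻¹' (St n) else ∅ with hT
  have htn : ∀ n ∈ I, t n = cylinder G (T n) := fun n hn => by
    rw [hT]; simp only [dif_pos hn]
    rw [hFt n]; exact cylinder_restrict₂ (hnG n hn) (St n)
  have hsub : Finset.restrict₂ hFG ⁻¹' S ⊆ ⋃ n ∈ I, T n := by
    have h1 : cylinder G (Finset.restrict₂ hFG ⁻¹' S) ⊆ cylinder G (⋃ n ∈ I, T n) := by
      rw [← cylinder_restrict₂ hFG S]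
      refine hI.trans ?_
      intro x hx
      simp only [mem_iUnion] at hx ⊢
      obtain ⟨n, hn, hx⟩ := hx
      rw [htn n hn] at hx
      rw [mem_cylinder]
      simp only [mem_iUnion]
      exact ⟨n, hn, hx⟩
    intro y hy
    obtain ⟨x, hx⟩ := hsurj y
    have := h1 (show x ∈ cylinder G _ by rw [mem_cylinder, hx]; exact hy)
    rw [mem_cylinder, hx] at this
    exact this
  calc P F S = P G (Finset.restrict₂ hFG ⁻¹' S) := apply_restrict₂ P hFG hc S
    _ ≤ ∑ n ∈ I, P G (T n) :=
        (measure_mono hsub).trans (measure_biUnion_finset_le _ _)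
    _ = ∑ n ∈ I, muZero P (t n) := by
        refine Finset.sum_congr rfl fun n hn => ?_
        rw [hT]; simp only [dif_pos hn]
        rw [hFt n, muZero_cylinder P hc, apply_restrict₂ P (hnG n hn) hc]
    _ ≤ ∑' n, muZero P (t n) := ENNReal.sum_le_tsum I

lemma caratheodory_cylinder [Nonempty (∀ j, X j)] (hc : Compat P)
    [∀ F, IsFiniteMeasure (P F)] (F : Finset J) (S : Set ((j : ↥F) → X j)) :
    MeasurableSet[(limOM P).caratheodory] (cylinder F S) := by
  classical
  refine OuterMeasure.ofFunction_caratheodory fun t => ?_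
  by_cases htop : muZero P t = ⊤
  · rw [htop]; exact le_top
  obtain ⟨F', S', rfl⟩ := exists_of_muZero_ne_top P htop
  have h1 : F' ⊆ F' ∪ F := Finset.subset_union_left
  have h2 : F ⊆ F' ∪ F := Finset.subset_union_right
  rw [cylinder_restrict₂ h1 S', cylinder_restrict₂ h2 S,
    inter_cylinder_same, diff_cylinder_same, muZero_cylinder P hc, muZero_cylinder P hc,
    muZero_cylinder P hc]
  exact (measure_inter_add_diff _ .of_discrete).le

lemma pi_le_caratheodory [Nonempty (∀ j, X j)] (hc : Compat P)
    [∀ F, IsFiniteMeasure (P F)] :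
    MeasurableSpace.pi ≤ (limOM P).caratheodory := by
  rw [← generateFrom_measurableCylinders]
  refine MeasurableSpace.generateFrom_le fun t ht => ?_
  obtain ⟨F, S, _, rfl⟩ := (mem_measurableCylinders t).mp ht
  exact caratheodory_cylinder P hc F S

/-- The projective limit measure. -/
noncomputable def limMeasure [Nonempty (∀ j, X j)] (hc : Compat P)
    [∀ F, IsFiniteMeasure (P F)] : Measure (∀ j, X j) :=
  (limOM P).toMeasure (pi_le_caratheodory P hc)

lemma limMeasure_cylinder [Nonempty (∀ j, X j)] (hc : Compat P)
    [∀ F, IsFiniteMeasure (P F)]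
    (F : Finset J) (S : Set ((j : ↥F) → X j)) :
    limMeasure P hc (cylinder F S) = P F S := by
  rw [limMeasure, toMeasure_apply _ _ (MeasurableSet.cylinder F .of_discrete),
    limOM_cylinder P hc]

lemma isProbabilityMeasure_limMeasure [Nonempty (∀ j, X j)] (hc : Compat P)
    [∀ F, IsProbabilityMeasure (P F)] : IsProbabilityMeasure (limMeasure P hc) := by
  constructor
  rw [← cylinder_univ (∅ : Finset J), limMeasure_cylinder P hc]
  exact measure_univ

lemma map_limMeasure [Nonempty (∀ j, X j)] (hc : Compat P)
    [∀ F, IsProbabilityMeasure (P F)] (F : Finset J) :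
    Measure.map (F.restrict) (limMeasure P hc) = P F := by
  ext S hS
  rw [Measure.map_apply (Finset.measurable_restrict F) hS]
  exact limMeasure_cylinder P hc F S

end Top

end StoneKernelAux

open MeasureTheory Set ProbabilityTheory

open StoneKernelAux in
/-- A compatible family of locally constant Markov kernels from a Stone
space `A` to the finite marginals of a countable product of finite discrete spaces extends
to a locally constant Markov kernel from `A` into the product. -/
theorem exists_kernel_extending_compatible_family
    {A : Type*}
    [TopologicalSpace A] [CompactSpace A] [T2Space A] [TotallyDisconnectedSpace A]
    [MeasurableSpace A] [BorelSpace A]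
    {J : Type*} [Countable J] {X : J → Type*}
    [∀ j, Finite (X j)] [∀ j, TopologicalSpace (X j)] [∀ j, DiscreteTopology (X j)]
    [∀ j, MeasurableSpace (X j)] [∀ j, DiscreteMeasurableSpace (X j)]
    [BorelSpace (∀ j, X j)]
    (f : ∀ F : Finset J, Kernel A ((j : F) → X j))
    (hMarkov : ∀ F : Finset J, IsMarkovKernel (f F))
    (hlc : ∀ (F : Finset J) (S : Set ((j : F) → X j)),
      IsLocallyConstant fun a => f F a S)
    (hcompat : ∀ (F F' : Finset J) (hFF' : F ⊆ F') (a : A),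
      Measure.map (fun (x : (j : F') → X j) (j : F) => x ⟨j.1, hFF' j.2⟩) (f F' a)
        = f F a) :
    ∃ κ : Kernel A (∀ j, X j), IsMarkovKernel κ ∧
      (∀ U : Set (∀ j, X j), IsClopen U → IsLocallyConstant fun a => κ a U) ∧
      ∀ (F : Finset J) (a : A),
        Measure.map (fun x (j : F) => x j) (κ a) = f F a := by
  classical
  haveI : ∀ F : Finset J, IsMarkovKernel (f F) := hMarkov
  by_cases hA : Nonempty A
  case neg =>
    refine ⟨0, ⟨fun a => (hA ⟨a⟩).elim⟩, fun U _ => ?_, fun F a => (hA ⟨a⟩).elim⟩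
    intro s
    convert isOpen_const (p := False) using 1
    ext a
    exact (hA ⟨a⟩).elim
  obtain ⟨a₀⟩ := hA
  haveI hne : ∀ j, Nonempty (X j) := by
    intro j
    by_contra h
    rw [not_nonempty_iff] at h
    have he : IsEmpty ((k : ({j} : Finset J)) → X k) :=
      ⟨fun y => h.elim' (y ⟨j, Finset.mem_singleton_self j⟩)⟩
    have h1 : (f ({j} : Finset J) a₀) Set.univ = 1 := measure_univ
    rw [Set.univ_eq_empty_iff.mpr he, measure_empty] at h1
    exact zero_ne_one h1
  haveI : Nonempty (∀ j, X j) := ⟨fun j => (hne j).some⟩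
  have hc : ∀ a : A, Compat (fun F => f F a) := fun a F G h => hcompat F G h a
  set κμ : A → Measure (∀ j, X j) := fun a => limMeasure (fun F => f F a) (hc a) with hκμ
  haveI hprob : ∀ a, IsProbabilityMeasure (κμ a) :=
    fun a => isProbabilityMeasure_limMeasure _ (hc a)
  have hcyl : ∀ (a : A) (F : Finset J) (S : Set ((j : F) → X j)),
      κμ a (cylinder F S) = f F a S :=
    fun a F S => limMeasure_cylinder (fun F => f F a) (hc a) F S
  -- measurability of the kernel
  have hmeas : ∀ (s : Set (∀ j, X j)), MeasurableSet s → Measurable fun a => κμ a s := by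
    refine fun s hs => MeasurableSpace.induction_on_inter
      (C := fun s _ => Measurable fun a => κμ a s)
      generateFrom_measurableCylinders.symm isPiSystem_measurableCylinders
      (by simp only [measure_empty]; exact measurable_const) ?_ ?_ ?_ s hs
    · intro t ht
      obtain ⟨F, S, _, rfl⟩ := (mem_measurableCylinders t).mp ht
      simp only [hcyl]
      exact (hlc F S).continuous.measurable
    · intro t htm hrec
      have : ∀ a, κμ a tᶜ = 1 - κμ a t := fun a => by
        rw [measure_compl htm (measure_ne_top _ _), measure_univ]
      simp only [this]
      exact Measurable.const_sub hrec _
    · intro g hdis hgm hrec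
      simp only [measure_iUnion hdis hgm]
      exact Measurable.ennreal_tsum hrec
  refine ⟨⟨κμ, Measure.measurable_of_measurable_coe _ hmeas⟩, ⟨hprob⟩, ?_, ?_⟩
  · -- locally constant on clopens
    intro U hU
    have hUmem : U ∈ measurableCylinders X := by
      have hUc : IsCompact U := hU.isClosed.isCompact
      have hU' := hU.isOpen
      rw [isOpen_pi_iff] at hU'
      choose I u hu hsub using fun (x : U) => hU' x.1 x.2
      have hCopen : ∀ x : U, IsOpen ((I x : Set J).pi (u x)) :=
        fun x => isOpen_set_pi (Finset.finite_toSet _) fun j hj => (hu x j hj).1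
      have hCcov : U ⊆ ⋃ x : U, (I x : Set J).pi (u x) := fun y hy =>
        Set.mem_iUnion.mpr ⟨⟨y, hy⟩, fun j hj => (hu ⟨y, hy⟩ j hj).2⟩
      obtain ⟨t, ht⟩ := hUc.elim_finite_subcover _ hCopen hCcov
      have hUeq : U = ⋃ x ∈ t, (I x : Set J).pi (u x) := by
        refine le_antisymm ht ?_
        refine Set.iUnion₂_subset fun x _ => hsub x
      have hCmem : ∀ x : U, (I x : Set J).pi (u x) ∈ measurableCylinders X := by
        intro x
        have : (I x : Set J).pi (u x)
            = cylinder (I x) {y | ∀ j : (I x : Finset J), y j ∈ u x j} := by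
          ext z
          simp only [Set.mem_pi, mem_cylinder, Set.mem_setOf_eq, Finset.restrict,
            Finset.coe_mem]
          exact ⟨fun h j => h j.1 j.2, fun h j hj => h ⟨j, hj⟩⟩
        rw [this]
        exact cylinder_mem_measurableCylinders _ _ .of_discrete
      rw [hUeq]
      clear ht hUeq hCcov
      induction t using Finset.induction with
      | empty => simp only [Finset.notMem_empty, Set.iUnion_of_empty, Set.iUnion_empty]
                 exact empty_mem_measurableCylinders X
      | @insert x s _ ih =>
          rw [Finset.set_biUnion_insert]
          exact union_mem_measurableCylinders (hCmem x) ih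
    obtain ⟨F, S, _, rfl⟩ := (mem_measurableCylinders _).mp hUmem
    show IsLocallyConstant fun a => κμ a (cylinder F S)
    simp only [hcyl]
    exact hlc F S
  · intro F a
    exact map_limMeasure (fun F => f F a) (hc a) F
end

section
/- Let X be a measurable space and κ a Markov kernel from X to X. Suppose c assigns to each n : ℕ a Markov kernel c n from X to Fin (n+1) → X satisfying: (c 0) x = Measure.map (fun y => fun _ : Fin 1 => y) (κ x) for all x, and (c (n+1)) x = (κ x).bind (fun y => Measure.map (Fin.cons y) ((c n) y)) for all n and x (the time-homogeneous Markov chain with transition kernel κ). Then the family is projectively compatible: for all n and x, Measure.map Fin.init ((c (n+1)) x) = (c n) x, i.e., discarding the last step of the (n+2)-step chain yields the (n+1)-step chain. -/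
open MeasureTheory ProbabilityTheory

private def initF {X : Type*} (n : ℕ) : (Fin (n + 1) → X) → (Fin n → X) :=
  fun v => Fin.init v

private def consF {X : Type*} (n : ℕ) (y : X) : (Fin (n + 1) → X) → (Fin (n + 2) → X) :=
  fun v => Fin.cons y v

private lemma initF_consF {X : Type*} {n : ℕ} (y : X) (v : Fin (n + 2) → X) :
    initF (n + 2) (consF (n + 1) y v) = consF n y (initF (n + 1) v) := by
  funext i
  refine Fin.cases ?_ (fun j => ?_) i
  · simp [initF, consF, Fin.init]
  · simp [initF, consF, Fin.init, Fin.castSucc_fin_succ]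

private lemma measurable_initF {X : Type*} [MeasurableSpace X] {n : ℕ} :
    Measurable (initF (X := X) n) :=
  measurable_pi_lambda _ fun _ => measurable_pi_apply _

private lemma measurable_consF_uncurry {X : Type*} [MeasurableSpace X] {n : ℕ} :
    Measurable (fun p : X × (Fin (n + 1) → X) => consF n p.1 p.2) := by
  refine measurable_pi_lambda _ fun i => ?_
  refine Fin.cases ?_ (fun j => ?_) i
  · simpa [consF] using measurable_fst
  · simp only [consF, Fin.cons_succ]
    exact (measurable_pi_apply j).comp measurable_snd

private lemma measurable_consF {X : Type*} [MeasurableSpace X] {n : ℕ} (y : X) :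
    Measurable (consF (X := X) n y) :=
  measurable_consF_uncurry.comp (measurable_prodMk_left (x := y))

/-- The joint laws of a time-homogeneous Markov chain form a projectively
compatible family: discarding the last step of the `(n+2)`-step chain yields the
`(n+1)`-step chain. -/
theorem markov_chain_compatible
    {X : Type*} [MeasurableSpace X]
    (κ : Kernel X X) [IsMarkovKernel κ]
    (c : ∀ n : ℕ, Kernel X (Fin (n + 1) → X))
    (hM : ∀ n, IsMarkovKernel (c n))
    (h0 : ∀ x, (c 0) x = Measure.map (fun y => fun _ : Fin 1 => y) (κ x))
    (hsucc : ∀ (n : ℕ) (x : X),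
      (c (n + 1)) x = (κ x).bind fun y => Measure.map (Fin.cons y) ((c n) y)) :
    ∀ (n : ℕ) (x : X), Measure.map Fin.init ((c (n + 1)) x) = (c n) x := by
  have hsucc' : ∀ (n : ℕ) (x : X),
      (c (n + 1)) x = (κ x).bind fun y => Measure.map (consF n y) ((c n) y) := hsucc
  have hηmeas : ∀ n : ℕ, Measurable (fun y : X => Measure.map (consF n y) ((c n) y)) := by
    intro n
    have : (fun y : X => Measure.map (consF n y) ((c n) y)) =
        fun y => ((Kernel.id ×ₖ c n).map (fun p : X × (Fin (n + 1) → X) => consF n p.1 p.2)) y := by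
      funext y
      rw [Kernel.map_apply _ measurable_consF_uncurry, Kernel.prod_apply, Kernel.id_apply,
        Measure.dirac_prod, Measure.map_map measurable_consF_uncurry measurable_prodMk_left]
      rfl
    rw [this]
    exact Kernel.measurable _
  have key : ∀ n (x : X), Measure.map (initF (n + 1)) ((c (n + 1)) x) =
      (κ x).bind fun y => Measure.map (initF (n + 1)) (Measure.map (consF n y) ((c n) y)) := by
    intro n x
    rw [hsucc' n x, ← Measure.bind_dirac_eq_map _ measurable_initF,
      Measure.bind_bind (g := fun v : Fin (n + 2) → X => Measure.dirac (initF (n + 1) v))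
        (hηmeas n).aemeasurable (Measure.measurable_dirac.comp measurable_initF).aemeasurable]
    congr 1
    funext y
    rw [Measure.bind_dirac_eq_map _ measurable_initF]
  intro n
  induction n with
  | zero =>
    intro x
    show Measure.map (initF 1) ((c 1) x) = (c 0) x
    rw [key 0 x]
    have : ∀ y : X, Measure.map (initF 1) (Measure.map (consF 0 y) ((c 0) y)) =
        Measure.dirac (fun _ : Fin 1 => y) := by
      intro y
      rw [Measure.map_map measurable_initF (measurable_consF y)]
      have hconst : (initF 1 ∘ consF 0 y : (Fin 1 → X) → Fin 1 → X) =
          fun _ => fun _ : Fin 1 => y := by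
        funext v i
        have : i = 0 := Subsingleton.elim _ _
        subst this
        simp [initF, consF, Fin.init]
      rw [hconst]
      haveI := hM 0
      simp [Measure.map_const]
    simp_rw [this]
    rw [Measure.bind_dirac_eq_map]
    · exact (h0 x).symm
    · exact measurable_pi_lambda _ fun _ => measurable_id
  | succ m ih =>
    intro x
    show Measure.map (initF (m + 2)) ((c (m + 2)) x) = (c (m + 1)) x
    rw [key (m + 1) x, hsucc' m x]
    congr 1
    funext y
    rw [Measure.map_map measurable_initF (measurable_consF y)]
    have : (initF (m + 2) ∘ consF (m + 1) y : (Fin (m + 2) → X) → Fin (m + 2) → X) =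
        (consF m y) ∘ (initF (m + 1)) := by
      funext v
      exact initF_consF y v
    rw [this, ← Measure.map_map (measurable_consF y) measurable_initF]
    have ihy : Measure.map (initF (m + 1)) ((c (m + 1)) y) = (c m) y := ih y
    rw [ihy]
end
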